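/- Let B and C be the central binomial and Catalan generating functions over ℚ. For every n ≥ 0, the coefficient of z^n in B·C·(B + 4z·(1−4z)⁻¹) equals (2n+1)²·C_n, where C_n is the n-th Catalan number; that is, the total number of vertices over all complete binary trees with n internal vertices, each carrying a distinguished mutator vertex, is (2n+1)²·C_n. -/

import Mathlib

/-!
Put `u = 1 - 2XC`. The Catalan equation `C = 1 + XC²` gives `u² = 1 - 4X`, and differentiated it
gives `uC' = C²`; since `B = C + XC'` (that is, `binom(2n,n) = (n+1)Cₙ`), this yields `uB = 1` and
`u' = -2B`. Hence `B² = (1 - 4X)⁻¹`, differentiating `uB = 1` gives `B' = 2B³`, and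
`BC(B + 4XB²) = C + 4XB'` follows algebraically. Its coefficient of `zⁿ` is
`Cₙ + 4n·binom(2n,n) = (1 + 4n(n+1))Cₙ = (2n+1)²Cₙ`.
-/

open PowerSeries Finset

/-- The central binomial generating function `B = ∑ binom(2n,n) zⁿ` over `ℚ`. -/
noncomputable def Bgf : PowerSeries ℚ := PowerSeries.mk fun n => ((2 * n).choose n : ℚ)

/-- The Catalan generating function `C = ∑ Cₙ zⁿ` over `ℚ`. -/
noncomputable def Cgf : PowerSeries ℚ := PowerSeries.mk fun n => (catalan n : ℚ)

theorem PowerSeries.coeff_X_mul_derivative {R : Type*} [CommSemiring R] (f : R⟦X⟧) (n : ℕ) :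
    coeff n (X * d⁄dX R f) = n * coeff n f := by
  cases n with
  | zero => simp
  | succ n => rw [coeff_succ_X_mul, coeff_derivative, mul_comm]; push_cast; rfl

theorem Cgf_eq_map_catalanSeries : Cgf = map (Nat.castRingHom ℚ) catalanSeries := by
  ext n
  simp [Cgf, catalanSeries_coeff]

theorem Cgf_eq_one_add_X_mul_sq : Cgf = 1 + X * Cgf ^ 2 := by
  have h := congrArg (map (Nat.castRingHom ℚ)) catalanSeries_sq_mul_X_add_one
  simp only [map_add, map_mul, map_pow, map_X, map_one, ← Cgf_eq_map_catalanSeries] at h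
  linear_combination -h

theorem Bgf_eq_Cgf_add_X_mul_derivative : Bgf = Cgf + X * d⁄dX ℚ Cgf := by
  ext n
  rw [map_add, coeff_X_mul_derivative]
  simp only [Bgf, Cgf, coeff_mk, ← Nat.centralBinom_eq_two_mul_choose,
    ← succ_mul_catalan_eq_centralBinom]
  push_cast
  ring

theorem one_sub_two_X_mul_Cgf_sq : (1 - 2 * X * Cgf) ^ 2 = 1 - 4 * X := by
  linear_combination -4 * X * Cgf_eq_one_add_X_mul_sq

theorem one_sub_two_X_mul_Cgf_mul_derivative :
    (1 - 2 * X * Cgf) * d⁄dX ℚ Cgf = Cgf ^ 2 := by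
  have h := congrArg (d⁄dX ℚ) Cgf_eq_one_add_X_mul_sq
  simp only [map_add, Derivation.map_one_eq_zero, Derivation.leibniz, Derivation.leibniz_pow,
    derivative_X, smul_eq_mul] at h
  linear_combination h

theorem one_sub_two_X_mul_Cgf_mul_Bgf : (1 - 2 * X * Cgf) * Bgf = 1 := by
  linear_combination (1 - 2 * X * Cgf) * Bgf_eq_Cgf_add_X_mul_derivative +
    X * one_sub_two_X_mul_Cgf_mul_derivative + Cgf_eq_one_add_X_mul_sq

theorem Bgf_sq_mul_one_sub_four_X : Bgf ^ 2 * (1 - 4 * X) = 1 := by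
  linear_combination (1 + (1 - 2 * X * Cgf) * Bgf) * one_sub_two_X_mul_Cgf_mul_Bgf -
    Bgf ^ 2 * one_sub_two_X_mul_Cgf_sq

theorem inv_one_sub_four_X : (1 - 4 * X : ℚ⟦X⟧)⁻¹ = Bgf ^ 2 := by
  rw [PowerSeries.inv_eq_iff_mul_eq_one (by simp), Bgf_sq_mul_one_sub_four_X]

theorem derivative_one_sub_two_X_mul_Cgf : d⁄dX ℚ (1 - 2 * X * Cgf) = -2 * Bgf := by
  have h2 : d⁄dX ℚ (2 : ℚ⟦X⟧) = 0 := (d⁄dX ℚ).map_natCast 2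
  simp only [map_sub, Derivation.map_one_eq_zero, Derivation.leibniz, derivative_X, h2,
    smul_eq_mul, Bgf_eq_Cgf_add_X_mul_derivative]
  ring

theorem derivative_Bgf : d⁄dX ℚ Bgf = 2 * Bgf ^ 3 := by
  have h := congrArg (d⁄dX ℚ) one_sub_two_X_mul_Cgf_mul_Bgf
  simp only [Derivation.leibniz, derivative_one_sub_two_X_mul_Cgf, Derivation.map_one_eq_zero,
    smul_eq_mul] at h
  linear_combination Bgf * h - d⁄dX ℚ Bgf * one_sub_two_X_mul_Cgf_mul_Bgf

theorem Cgf_mul_one_add_Bgf : Cgf * (1 + Bgf) = 2 * Bgf := by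
  linear_combination
    (Bgf * (Cgf - 2) - (Cgf * (1 + Bgf) - 2 * Bgf)) * one_sub_two_X_mul_Cgf_mul_Bgf +
      2 * Bgf * Cgf_eq_one_add_X_mul_sq

theorem Bgf_mul_Cgf_mul_eq :
    Bgf * Cgf * (Bgf + 4 * X * Bgf ^ 2) = Cgf + 4 * (X * d⁄dX ℚ Bgf) := by
  rw [derivative_Bgf]
  linear_combination 4 * X * Bgf ^ 2 * Cgf_mul_one_add_Bgf + Cgf * Bgf_sq_mul_one_sub_four_X

/-- `[zⁿ](B·C·(B + 4z·(1−4z)⁻¹)) = (2n+1)²·Cₙ`: the total number of vertices over all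
complete binary trees with `n` internal vertices carrying a distinguished mutator. -/
theorem stmt18 (n : ℕ) :
    PowerSeries.coeff (R := ℚ) n
        (Bgf * Cgf * (Bgf + 4 * PowerSeries.X * (1 - 4 * PowerSeries.X)⁻¹)) =
      ((2 * n + 1 : ℕ) : ℚ) ^ 2 * (catalan n : ℚ) := by
  rw [inv_one_sub_four_X, Bgf_mul_Cgf_mul_eq, map_add, ← map_ofNat C 4, coeff_C_mul,
    coeff_X_mul_derivative]
  simp only [Bgf, Cgf, coeff_mk, ← Nat.centralBinom_eq_two_mul_choose,
    ← succ_mul_catalan_eq_centralBinom]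
  push_cast
  ring
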